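/- arXiv:2605.10778 — 9 statements merged into one kernel-verified Lean document; each statement's English description precedes it below -/
import Mathlib

section
/- Let H = (V,E) be an h-hypergraph, ≺ a linear order on E, and k ∈ ℕ. If S ⊆ E_{≥3} satisfies 3·|S| ≥ k + 3 (i.e., S contains at least k/3 + 1 hyperedges), then I'_S(H,k) = ∅. -/
attribute [local instance] Classical.propDecidable

/-- The independent sets of cardinality `k` of the underlying graph of the hypergraph with
hyperedge set `E`. -/
noncomputable def indepG {V : Type} [Fintype V] (E : Finset (Finset V)) (k : ℕ) :
    Finset (Finset V) :=
  Finset.univ.filter fun X => X.card = k ∧ ∀ e ∈ E, e.card = 2 → ¬ e ⊆ X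

/-- `I_invalid(H,k)`: independent sets of the underlying graph of cardinality `k` containing
some hyperedge of cardinality at least `3`. -/
noncomputable def invalidSets {V : Type} [Fintype V] (E : Finset (Finset V)) (k : ℕ) :
    Finset (Finset V) :=
  (indepG E k).filter fun X => ∃ e ∈ E, 3 ≤ e.card ∧ e ⊆ X

/-- `I_S(H,k)`: independent sets of the underlying graph of cardinality `k` containing all
hyperedges of `S`. -/
noncomputable def ISets {V : Type} [Fintype V] (E S : Finset (Finset V)) (k : ℕ) :
    Finset (Finset V) :=
  (indepG E k).filter fun X => ∀ e ∈ S, e ⊆ X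

/-- `I'_S(H,k)`: members `X` of `I_S(H,k)` such that for every `e ∈ S` and every hyperedge
`e' ∈ E` of cardinality at least 3 with `e ∩ e' ≠ ∅` and `e' ≺ e`, `e'` is not contained
in `X`. -/
noncomputable def Iprime {V : Type} [Fintype V] [DecidableEq V] (E : Finset (Finset V))
    (r : Finset V → Finset V → Prop) (S : Finset (Finset V)) (k : ℕ) : Finset (Finset V) :=
  (ISets E S k).filter fun X =>
    ∀ e ∈ S, ∀ e' ∈ E, 3 ≤ e'.card → (e ∩ e').Nonempty → r e' e → ¬ e' ⊆ X

theorem mem_Iprime {V : Type} [Fintype V] [DecidableEq V] {E S : Finset (Finset V)}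
    {r : Finset V → Finset V → Prop} {k : ℕ} {X : Finset V} :
    X ∈ Iprime E r S k ↔
      (X.card = k ∧ ∀ e ∈ E, e.card = 2 → ¬ e ⊆ X) ∧ (∀ e ∈ S, e ⊆ X) ∧
        ∀ e ∈ S, ∀ e' ∈ E, 3 ≤ e'.card → (e ∩ e').Nonempty → r e' e → ¬ e' ⊆ X := by
  simp only [Iprime, ISets, indepG, Finset.mem_filter, Finset.mem_univ, true_and, and_assoc]

/-- Two distinct hyperedges of `S` that meet cannot both lie in `X`: the one that comes first
in the order would be forbidden by the other. -/
theorem pairwiseDisjoint_of_mem_Iprime {V : Type} [Fintype V] [DecidableEq V]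
    {E S : Finset (Finset V)} {r : Finset V → Finset V → Prop} {k : ℕ} {X : Finset V}
    (htotal : ∀ e ∈ E, ∀ e' ∈ E, e ≠ e' → r e e' ∨ r e' e)
    (hS : S ⊆ E.filter fun e => 3 ≤ e.card) (hX : X ∈ Iprime E r S k) :
    (S : Set (Finset V)).PairwiseDisjoint id := by
  obtain ⟨-, hsub, hfree⟩ := mem_Iprime.mp hX
  have hSE : ∀ e ∈ S, e ∈ E ∧ 3 ≤ e.card := fun e he => Finset.mem_filter.mp (hS he)
  intro e he e' he' hne
  change Disjoint e e'
  by_contra hmeet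
  rw [Finset.not_disjoint_iff_nonempty_inter] at hmeet
  rcases htotal e (hSE e he).1 e' (hSE e' he').1 hne with hr | hr
  · exact hfree e' he' e (hSE e he).1 (hSE e he).2 (Finset.inter_comm e e' ▸ hmeet) hr
      (hsub e he)
  · exact hfree e he e' (hSE e' he').1 (hSE e' he').2 hmeet hr (hsub e' he')

theorem mul_card_le_card_of_pairwiseDisjoint {α : Type*} {S : Finset (Finset α)} {X : Finset α}
    {m : ℕ} (hm : ∀ e ∈ S, m ≤ e.card) (hsub : ∀ e ∈ S, e ⊆ X)
    (hdisj : (S : Set (Finset α)).PairwiseDisjoint id) : m * S.card ≤ X.card :=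
  calc m * S.card = ∑ _e ∈ S, m := by rw [Finset.sum_const, smul_eq_mul, mul_comm]
    _ ≤ ∑ e ∈ S, e.card := Finset.sum_le_sum hm
    _ = (S.disjiUnion id hdisj).card := (Finset.card_disjiUnion S id hdisj).symm
    _ ≤ X.card := Finset.card_le_card fun a ha => by
      obtain ⟨e, he, hae⟩ := Finset.mem_disjiUnion.mp ha
      exact hsub e he hae

theorem Iprime_eq_empty_of_large_general {V : Type} [Fintype V] [DecidableEq V]
    (E : Finset (Finset V))
    (r : Finset V → Finset V → Prop)
    (htotal : ∀ e ∈ E, ∀ e' ∈ E, e ≠ e' → r e e' ∨ r e' e)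
    (k : ℕ) (S : Finset (Finset V)) (hS : S ⊆ E.filter fun e => 3 ≤ e.card)
    (hbig : k + 3 ≤ 3 * S.card) :
    Iprime E r S k = ∅ := by
  refine Finset.eq_empty_iff_forall_notMem.mpr fun X hX => ?_
  obtain ⟨⟨hcard, -⟩, hsub, -⟩ := mem_Iprime.mp hX
  have hthree : ∀ e ∈ S, 3 ≤ e.card := fun e he => (Finset.mem_filter.mp (hS he)).2
  have hcover : 3 * S.card ≤ X.card := mul_card_le_card_of_pairwiseDisjoint hthree hsub
    (pairwiseDisjoint_of_mem_Iprime htotal hS hX)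
  omega

/-- If `S ⊆ E_{≥3}` contains at least `k/3 + 1` hyperedges (i.e. `3·|S| ≥ k + 3`), then
`I'_S(H,k) = ∅`. -/
theorem Iprime_eq_empty_of_large {V : Type} [Fintype V] [DecidableEq V] (h : ℕ)
    (E : Finset (Finset V)) (hE : ∀ e ∈ E, 2 ≤ e.card ∧ e.card ≤ h)
    (r : Finset V → Finset V → Prop)
    (hirrefl : ∀ e ∈ E, ¬ r e e)
    (htrans : ∀ e ∈ E, ∀ e' ∈ E, ∀ e'' ∈ E, r e e' → r e' e'' → r e e'')
    (htotal : ∀ e ∈ E, ∀ e' ∈ E, e ≠ e' → r e e' ∨ r e' e)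
    (k : ℕ) (S : Finset (Finset V)) (hS : S ⊆ E.filter fun e => 3 ≤ e.card)
    (hbig : k + 3 ≤ 3 * S.card) :
    Iprime E r S k = ∅ :=
  Iprime_eq_empty_of_large_general E r htotal k S hS hbig
end

section
/- Let H = (V,E) be an h-hypergraph, ≺ a linear order on E, and k ∈ ℕ. Then, as an identity of integers, |I_invalid(H,k)| = Σ_{i=1}^{⌈k/3⌉} Σ_{S ⊆ E_{≥3}, |S| = i} (−1)^{i+1} · |I'_S(H,k)|. -/
attribute [local instance] Classical.propDecidable

/-!
For `X ∈ I(G,k)` let `M(X)` (`minimalLargeEdges`) be the set of hyperedges `e ∈ E_{≥3}` with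
`e ⊆ X` such that no hyperedge of `E_{≥3}` that meets `e` and precedes it lies in `X`. Then
`X ∈ I'_S(H,k)` exactly when `S ⊆ M(X)`, so `X` contributes
`Σ_{i=1}^{⌈k/3⌉} (-1)^{i+1} C(|M(X)|, i)` to the right-hand side. By totality of `≺` the members
of `M(X)` are pairwise disjoint, so `|M(X)| ≤ k/3` and this sum is `1` if `M(X) ≠ ∅` and `0`
otherwise. Finally `M(X) ≠ ∅` iff `X` is invalid, because the `≺`-least hyperedge of `E_{≥3}`
contained in `X` lies in `M(X)`.
-/

open Finset

theorem Finset.exists_forall_not_rel_of_irrefl_of_trans {α : Type*} (r : α → α → Prop)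
    {A : Finset α} (hA : A.Nonempty) (hirrefl : ∀ a ∈ A, ¬ r a a)
    (htrans : ∀ a ∈ A, ∀ b ∈ A, ∀ c ∈ A, r a b → r b c → r a c) :
    ∃ m ∈ A, ∀ a ∈ A, ¬ r a m := by
  obtain ⟨a, ha⟩ := hA
  let s : A → A → Prop := fun a b => r a b
  have : IsTrans A s := ⟨fun a b c => htrans a a.2 b b.2 c c.2⟩
  have : Std.Irrefl s := ⟨fun a => hirrefl a a.2⟩
  obtain ⟨⟨m, hm⟩, -, hmin⟩ :=
    (Finite.wellFounded_of_trans_of_irrefl s).has_min Set.univ ⟨⟨a, ha⟩, trivial⟩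
  exact ⟨m, hm, fun a ha => hmin ⟨a, ha⟩ trivial⟩

theorem Int.alternating_sum_Icc_choose_of_le {m c : ℕ} (hmc : m ≤ c) :
    ∑ i ∈ Icc 1 c, (-1 : ℤ) ^ (i + 1) * m.choose i = if 0 < m then 1 else 0 := by
  have hrange :
      ∑ i ∈ Finset.range (c + 1), (-1 : ℤ) ^ i * m.choose i = if m = 0 then 1 else 0 := by
    rw [← Int.alternating_sum_range_choose]
    refine (sum_subset (range_subset_range.mpr (by omega)) fun i _ hi => ?_).symm
    rw [Nat.choose_eq_zero_of_lt (by simpa using hi), Nat.cast_zero, mul_zero]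
  rw [range_eq_Ico, sum_eq_sum_Ico_succ_bot (by omega), zero_add,
    Ico_add_one_right_eq_Icc] at hrange
  simp only [pow_zero, one_mul, Nat.choose_zero_right, Nat.cast_one,
    Nat.pos_iff_ne_zero] at hrange ⊢
  simp_rw [pow_succ, mul_neg_one, neg_mul, sum_neg_distrib]
  split_ifs at hrange ⊢ <;> omega

theorem card_of_mem_indepG {V : Type} [Fintype V] {E : Finset (Finset V)} {k : ℕ}
    {X : Finset V} (hX : X ∈ indepG E k) : #X = k := by
  rw [indepG, mem_filter] at hX
  exact hX.2.1

section MinimalLargeEdges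

variable {V : Type} [DecidableEq V] (E : Finset (Finset V)) (r : Finset V → Finset V → Prop)

noncomputable def minimalLargeEdges (X : Finset V) : Finset (Finset V) :=
  E.filter fun e => 3 ≤ e.card ∧ e ⊆ X ∧
    ∀ e' ∈ E, 3 ≤ e'.card → (e ∩ e').Nonempty → r e' e → ¬ e' ⊆ X

variable {E r}

theorem mem_minimalLargeEdges {X e : Finset V} :
    e ∈ minimalLargeEdges E r X ↔ e ∈ E ∧ 3 ≤ #e ∧ e ⊆ X ∧
      ∀ e' ∈ E, 3 ≤ #e' → (e ∩ e').Nonempty → r e' e → ¬ e' ⊆ X :=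
  mem_filter

theorem pairwiseDisjoint_minimalLargeEdges
    (htotal : ∀ e ∈ E, ∀ e' ∈ E, e ≠ e' → r e e' ∨ r e' e) (X : Finset V) :
    (minimalLargeEdges E r X : Set (Finset V)).PairwiseDisjoint id := by
  intro e he e' he' hne
  rw [mem_coe, mem_minimalLargeEdges] at he he'
  rw [Function.onFun, id, id, disjoint_iff_inter_eq_empty, ← not_nonempty_iff_eq_empty]
  intro hmeet
  rcases htotal e he.1 e' he'.1 hne with hr | hr
  · exact he'.2.2.2 e he.1 he.2.1 (inter_comm e e' ▸ hmeet) hr he.2.2.1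
  · exact he.2.2.2 e' he'.1 he'.2.1 hmeet hr he'.2.2.1

theorem minimalLargeEdges_subset_filter (X : Finset V) :
    minimalLargeEdges E r X ⊆ E.filter fun e => 3 ≤ e.card := fun _ he =>
  mem_filter.mpr ⟨(mem_minimalLargeEdges.mp he).1, (mem_minimalLargeEdges.mp he).2.1⟩

theorem three_mul_card_minimalLargeEdges_le
    (htotal : ∀ e ∈ E, ∀ e' ∈ E, e ≠ e' → r e e' ∨ r e' e) (X : Finset V) :
    3 * #(minimalLargeEdges E r X) ≤ #X := by
  set M := minimalLargeEdges E r X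
  calc 3 * #M = ∑ _e ∈ M, 3 := by rw [sum_const, smul_eq_mul, mul_comm]
    _ ≤ ∑ e ∈ M, #e := sum_le_sum fun _ he => (mem_minimalLargeEdges.mp he).2.1
    _ = #(M.biUnion id) := (card_biUnion (pairwiseDisjoint_minimalLargeEdges htotal X)).symm
    _ ≤ #X := card_le_card (biUnion_subset.mpr fun _ he => (mem_minimalLargeEdges.mp he).2.2.1)

theorem minimalLargeEdges_nonempty_iff (hirrefl : ∀ e ∈ E, ¬ r e e)
    (htrans : ∀ e ∈ E, ∀ e' ∈ E, ∀ e'' ∈ E, r e e' → r e' e'' → r e e'') (X : Finset V) :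
    (minimalLargeEdges E r X).Nonempty ↔ ∃ e ∈ E, 3 ≤ e.card ∧ e ⊆ X := by
  constructor
  · rintro ⟨e, he⟩
    obtain ⟨heE, he3, heX, -⟩ := mem_minimalLargeEdges.mp he
    exact ⟨e, heE, he3, heX⟩
  · rintro ⟨e, heE, he3, heX⟩
    set A := E.filter fun e => 3 ≤ e.card ∧ e ⊆ X
    have hAE : A ⊆ E := filter_subset _ _
    obtain ⟨m, hmA, hmin⟩ := exists_forall_not_rel_of_irrefl_of_trans r
      ⟨e, mem_filter.mpr ⟨heE, he3, heX⟩⟩ (fun a ha => hirrefl a (hAE ha))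
      (fun a ha b hb c hc => htrans a (hAE ha) b (hAE hb) c (hAE hc))
    obtain ⟨hmE, hm3, hmX⟩ := mem_filter.mp hmA
    exact ⟨m, mem_minimalLargeEdges.mpr ⟨hmE, hm3, hmX, fun e' he'E he'3 _ hr he'X =>
      hmin e' (mem_filter.mpr ⟨he'E, he'3, he'X⟩) hr⟩⟩

variable [Fintype V]

theorem mem_Iprime_iff {S : Finset (Finset V)} (hS : S ⊆ E.filter fun e => 3 ≤ e.card)
    {k : ℕ} {X : Finset V} :
    X ∈ Iprime E r S k ↔ X ∈ indepG E k ∧ S ⊆ minimalLargeEdges E r X := by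
  simp only [Iprime, ISets, mem_filter, subset_iff, mem_minimalLargeEdges]
  constructor
  · rintro ⟨⟨hX, hSX⟩, hfirst⟩
    exact ⟨hX, fun e he => ⟨(mem_filter.mp (hS he)).1, (mem_filter.mp (hS he)).2, hSX e he,
      hfirst e he⟩⟩
  · rintro ⟨hX, hSM⟩
    exact ⟨⟨hX, fun e he => (hSM he).2.2.1⟩, fun e he => (hSM he).2.2.2⟩

theorem card_minimalLargeEdges_le_ceil
    (htotal : ∀ e ∈ E, ∀ e' ∈ E, e ≠ e' → r e e' ∨ r e' e) {k : ℕ} {X : Finset V}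
    (hX : X ∈ indepG E k) : #(minimalLargeEdges E r X) ≤ ⌈(k : ℚ) / 3⌉₊ := by
  have h3 := three_mul_card_minimalLargeEdges_le htotal X
  rw [card_of_mem_indepG hX] at h3
  have hdiv : (#(minimalLargeEdges E r X) : ℚ) ≤ k / 3 := by
    rw [le_div_iff₀ (by norm_num)]
    exact_mod_cast (by omega : #(minimalLargeEdges E r X) * 3 ≤ k)
  exact_mod_cast hdiv.trans (Nat.le_ceil _)

theorem sum_card_Iprime_eq_sum_choose (k i : ℕ) :
    ∑ S ∈ powersetCard i (E.filter fun e => 3 ≤ e.card), #(Iprime E r S k) =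
      ∑ X ∈ indepG E k, (#(minimalLargeEdges E r X)).choose i := by
  set F := E.filter fun e => 3 ≤ e.card
  set below : Finset V → Finset (Finset V) → Prop := fun X S => S ⊆ minimalLargeEdges E r X
  have hIprime : ∀ S ∈ powersetCard i F, Iprime E r S k = (indepG E k).bipartiteBelow below S :=
    fun S hS => by
      ext X
      rw [mem_Iprime_iff (mem_powersetCard.mp hS).1, mem_bipartiteBelow]
  have habove : ∀ X, (powersetCard i F).bipartiteAbove below X =
      powersetCard i (minimalLargeEdges E r X) := fun X => by
    ext S
    simp only [mem_bipartiteAbove, mem_powersetCard, below]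
    exact ⟨fun ⟨⟨_, hi⟩, hSM⟩ => ⟨hSM, hi⟩,
      fun ⟨hSM, hi⟩ => ⟨⟨hSM.trans (minimalLargeEdges_subset_filter X), hi⟩, hSM⟩⟩
  rw [sum_congr rfl fun S hS => by rw [hIprime S hS],
    ← sum_card_bipartiteAbove_eq_sum_card_bipartiteBelow]
  exact sum_congr rfl fun X _ => by rw [habove, card_powersetCard]

end MinimalLargeEdges

theorem invalid_card_inclusion_exclusion_Iprime_general {V : Type} [Fintype V] [DecidableEq V]
    (E : Finset (Finset V))
    (r : Finset V → Finset V → Prop)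
    (hirrefl : ∀ e ∈ E, ¬ r e e)
    (htrans : ∀ e ∈ E, ∀ e' ∈ E, ∀ e'' ∈ E, r e e' → r e' e'' → r e e'')
    (htotal : ∀ e ∈ E, ∀ e' ∈ E, e ≠ e' → r e e' ∨ r e' e)
    (k : ℕ) :
    ((invalidSets E k).card : ℤ) =
      ∑ i ∈ Finset.Icc 1 ⌈(k : ℚ) / 3⌉₊,
        ∑ S ∈ Finset.powersetCard i (E.filter fun e => 3 ≤ e.card),
          (-1 : ℤ) ^ (i + 1) * ((Iprime E r S k).card : ℤ) := by
  set c := ⌈(k : ℚ) / 3⌉₊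
  set M := minimalLargeEdges E r
  have hcount : ∀ X ∈ indepG E k, ∑ i ∈ Icc 1 c, (-1 : ℤ) ^ (i + 1) * (#(M X)).choose i =
      if ∃ e ∈ E, 3 ≤ #e ∧ e ⊆ X then 1 else 0 := fun X hX => by
    rw [Int.alternating_sum_Icc_choose_of_le (card_minimalLargeEdges_le_ceil htotal hX)]
    simp only [card_pos, minimalLargeEdges_nonempty_iff hirrefl htrans X]
  calc ((invalidSets E k).card : ℤ)
      = ∑ X ∈ indepG E k, if ∃ e ∈ E, 3 ≤ #e ∧ e ⊆ X then 1 else 0 := by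
        rw [invalidSets, card_filter]
        push_cast
        rfl
    _ = ∑ X ∈ indepG E k, ∑ i ∈ Icc 1 c, (-1 : ℤ) ^ (i + 1) * (#(M X)).choose i :=
        (sum_congr rfl hcount).symm
    _ = ∑ i ∈ Icc 1 c, (-1 : ℤ) ^ (i + 1) * ∑ X ∈ indepG E k, ((#(M X)).choose i : ℤ) := by
        rw [sum_comm]
        simp_rw [mul_sum]
    _ = _ := sum_congr rfl fun i _ => by
        rw [← mul_sum, ← Nat.cast_sum, ← sum_card_Iprime_eq_sum_choose, Nat.cast_sum]

/-- Refined inclusion–exclusion formula: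
`|I_invalid(H,k)| = Σ_{i=1}^{⌈k/3⌉} Σ_{S ⊆ E_{≥3}, |S| = i} (-1)^{i+1} |I'_S(H,k)|`. -/
theorem invalid_card_inclusion_exclusion_Iprime {V : Type} [Fintype V] [DecidableEq V]
    (h : ℕ) (E : Finset (Finset V)) (hE : ∀ e ∈ E, 2 ≤ e.card ∧ e.card ≤ h)
    (r : Finset V → Finset V → Prop)
    (hirrefl : ∀ e ∈ E, ¬ r e e)
    (htrans : ∀ e ∈ E, ∀ e' ∈ E, ∀ e'' ∈ E, r e e' → r e' e'' → r e e'')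
    (htotal : ∀ e ∈ E, ∀ e' ∈ E, e ≠ e' → r e e' ∨ r e' e)
    (k : ℕ) :
    ((invalidSets E k).card : ℤ) =
      ∑ i ∈ Finset.Icc 1 ⌈(k : ℚ) / 3⌉₊,
        ∑ S ∈ Finset.powersetCard i (E.filter fun e => 3 ≤ e.card),
          (-1 : ℤ) ^ (i + 1) * ((Iprime E r S k).card : ℤ) :=
  invalid_card_inclusion_exclusion_Iprime_general E r hirrefl htrans htotal k
end

section
/- Let ℓ ≥ 2 and let k₁ ≤ k₂ ≤ ⋯ ≤ k_ℓ be natural numbers. Then there exists a function c : {1,…,ℓ−2} → {1,2,3} assigning the values k₁,…,k_{ℓ−2} to three bins such that for every pair p,q ∈ {1,2,3}, the absolute difference |Σ_{i : c(i)=p} k_i − Σ_{j : c(j)=q} k_j| is at most k_{ℓ−1}. -/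
/-! Greedy: put the items into the bins one at a time, each into a currently lightest bin. If the
bin loads were pairwise within `B`, adding an item of weight `w ∈ [0, B]` to a lightest bin keeps
them so: that bin's load rises by `w ≤ B` and ends at most `w` above any other bin's. By
monotonicity `B = k_{ℓ-1}` bounds every item `k₁, …, k_{ℓ-2}`. -/

open Finset

section GreedyBins

variable {ι β α : Type*}

lemma abs_add_sub_le_of_le [AddCommGroup α] [LinearOrder α] [IsOrderedAddMonoid α]
    {a b w B : α} (hab : a ≤ b) (h : |a - b| ≤ B) (hw₀ : 0 ≤ w) (hwB : w ≤ B) :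
    |a + w - b| ≤ B := by
  refine abs_le.mpr
    ⟨(abs_le.mp h).1.trans (sub_le_sub_right (le_add_of_nonneg_right hw₀) b), ?_⟩
  calc a + w - b = w + (a - b) := by abel
    _ ≤ w := add_le_of_nonpos_right (sub_nonpos.mpr hab)
    _ ≤ B := hwB

lemma sum_filter_insert_update_eq [AddCommMonoid α] [DecidableEq ι] [DecidableEq β]
    {s : Finset ι} {x : ι} (hx : x ∉ s) (w : ι → α) (c : ι → β) (p₀ p : β) :
    ∑ i ∈ insert x s with Function.update c x p₀ i = p, w i =
      (∑ i ∈ s with c i = p, w i) + if p₀ = p then w x else 0 := by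
  have hs : ∀ i ∈ s, Function.update c x p₀ i = c i := fun i hi =>
    Function.update_of_ne (ne_of_mem_of_not_mem hi hx) _ _
  rw [filter_insert, Function.update_self, filter_congr fun i hi => by rw [hs i hi]]
  split_ifs with h
  · rw [sum_insert (by simp [hx]), add_comm]
  · rw [add_zero]

theorem exists_balanced_assignment [AddCommGroup α] [LinearOrder α] [IsOrderedAddMonoid α]
    [Fintype β] [Nonempty β] [DecidableEq β] (s : Finset ι) (w : ι → α) {B : α}
    (hB : 0 ≤ B) (hw₀ : ∀ i ∈ s, 0 ≤ w i) (hwB : ∀ i ∈ s, w i ≤ B) :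
    ∃ c : ι → β, ∀ p q : β,
      |(∑ i ∈ s with c i = p, w i) - ∑ i ∈ s with c i = q, w i| ≤ B := by
  classical
  induction s using Finset.induction_on with
  | empty => exact ⟨fun _ => Classical.arbitrary β, fun _ _ => by simpa using hB⟩
  | insert x s hx ih =>
    obtain ⟨c, hc⟩ := ih (fun i hi => hw₀ i (mem_insert_of_mem hi))
      (fun i hi => hwB i (mem_insert_of_mem hi))
    obtain ⟨p₀, -, hp₀⟩ := exists_min_image univ (fun p => ∑ i ∈ s with c i = p, w i)
      univ_nonempty
    have hx₀ := hw₀ x (mem_insert_self x s)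
    have hxB := hwB x (mem_insert_self x s)
    refine ⟨Function.update c x p₀, fun p q => ?_⟩
    simp only [sum_filter_insert_update_eq hx]
    by_cases hp : p₀ = p <;> by_cases hq : p₀ = q
    · subst hp hq
      simpa using hB
    · subst hp
      simpa [hq] using abs_add_sub_le_of_le (hp₀ q (mem_univ q)) (hc p₀ q) hx₀ hxB
    · subst hq
      rw [abs_sub_comm]
      simpa [hp] using abs_add_sub_le_of_le (hp₀ p (mem_univ p)) (hc p₀ p) hx₀ hxB
    · simpa [hp, hq] using hc p q

end GreedyBins

theorem balanced_bins_general (ℓ : ℕ) (k : ℕ → ℕ)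
    (hmono : ∀ i j : ℕ, 1 ≤ i → i ≤ j → j ≤ ℓ → k i ≤ k j) :
    ∃ c : ℕ → Fin 3, ∀ p q : Fin 3,
      |(∑ i ∈ (Finset.Icc 1 (ℓ - 2)).filter fun i => c i = p, (k i : ℤ)) -
        ∑ j ∈ (Finset.Icc 1 (ℓ - 2)).filter fun j => c j = q, (k j : ℤ)| ≤
        (k (ℓ - 1) : ℤ) := by
  refine exists_balanced_assignment _ _ (Int.natCast_nonneg _)
    (fun i _ => Int.natCast_nonneg _) fun i hi => ?_
  obtain ⟨h₁, h₂⟩ := mem_Icc.mp hi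
  exact_mod_cast hmono i (ℓ - 1) h₁ (by omega) (by omega)

/-- **Balanced bins.** Let `ℓ ≥ 2` and `k₁ ≤ k₂ ≤ ⋯ ≤ k_ℓ` be natural numbers. Then the values
`k₁, …, k_{ℓ-2}` can be distributed into three bins so that for every pair of bins the absolute
difference of their sums is at most `k_{ℓ-1}`. -/
theorem balanced_bins (ℓ : ℕ) (hℓ : 2 ≤ ℓ) (k : ℕ → ℕ)
    (hmono : ∀ i j : ℕ, 1 ≤ i → i ≤ j → j ≤ ℓ → k i ≤ k j) :
    ∃ c : ℕ → Fin 3, ∀ p q : Fin 3,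
      |(∑ i ∈ (Finset.Icc 1 (ℓ - 2)).filter fun i => c i = p, (k i : ℤ)) -
        ∑ j ∈ (Finset.Icc 1 (ℓ - 2)).filter fun j => c j = q, (k j : ℤ)| ≤
        (k (ℓ - 1) : ℤ) :=
  balanced_bins_general ℓ k hmono
end

section
/- Let h ≥ 1 and let f : {0,1}^h → {0,1} be a Boolean constraint function that is 0-valid (f(0,…,0) = 1) and non-trivial (some assignment violates f), with u_min(f) = c (so c ≥ 1). Define its symmetrization f_sym(x₁,…,x_h) := ⋀_{σ ∈ S_h} f(x_{σ(1)},…,x_{σ(h)}). Let k ≥ 0 and K := k + h. Then for every assignment a : {1,…,K} → {0,1} of weight at most k, the following are equivalent: (i) f_sym(a(ι(1)),…,a(ι(h))) = 1 for every injective map ι : {1,…,h} → {1,…,K}; (ii) the weight of a is strictly less than c. -/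
/-- The weight of a Boolean assignment: its number of `true` coordinates. -/
def bweight {r : ℕ} (x : Fin r → Bool) : ℕ :=
  (Finset.univ.filter fun j => x j = true).card

/-- The symmetrization `f_sym(x₁,…,x_h) = ⋀_{σ ∈ S_h} f(x_{σ(1)},…,x_{σ(h)})`. -/
def fsym {h : ℕ} (f : (Fin h → Bool) → Bool) (x : Fin h → Bool) : Bool :=
  decide (∀ σ : Equiv.Perm (Fin h), f (x ∘ σ) = true)

/-
An assignment `a` of weight `< c = u_min(f)` satisfies every `f_sym` placed on it, since
restricting `a` injectively and permuting can only lower the weight. Conversely, if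
`wt(a) ≥ c`, pick a violating `x` of weight `c`; as `wt(a) ≤ k`, `a` also has at least
`h - c` zeros, so `x` occurs as `a ∘ ι` for an injective `ι`, and `f_sym(a ∘ ι) = 0`.
-/

theorem exists_injective_comp_eq_of_card_fiber_le {α β γ : Type*} [Fintype α] [Fintype γ]
    [DecidableEq β] (x : α → β) (a : γ → β)
    (hcard : ∀ b, Fintype.card {i // x i = b} ≤ Fintype.card {j // a j = b}) :
    ∃ ι : α → γ, Function.Injective ι ∧ a ∘ ι = x := by
  have e : ∀ b, {i // x i = b} ↪ {j // a j = b} := fun b =>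
    (Function.Embedding.nonempty_of_card_le (hcard b)).some
  -- glue the fibrewise embeddings along `α ≃ Σ b, x⁻¹ {b}` and `γ ≃ Σ b, a⁻¹ {b}`
  refine ⟨Equiv.sigmaFiberEquiv a ∘ Sigma.map id (fun b => e b) ∘
      (Equiv.sigmaFiberEquiv x).symm, ?_, ?_⟩
  · exact (Equiv.injective _).comp
      ((Function.injective_id.sigma_map fun b => (e b).injective).comp (Equiv.injective _))
  · funext i
    exact (e (x i) ⟨i, rfl⟩).2

theorem card_subtype_eq_true {r : ℕ} (x : Fin r → Bool) :
    Fintype.card {j // x j = true} = bweight x := by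
  simp [bweight, Fintype.card_subtype]

theorem card_subtype_eq_false {r : ℕ} (x : Fin r → Bool) :
    Fintype.card {j // x j = false} = r - bweight x := by
  simp_rw [← Bool.not_eq_true]
  rw [Fintype.card_subtype_compl, card_subtype_eq_true, Fintype.card_fin]

theorem exists_injective_comp_eq_of_bweight_le {r s : ℕ} (x : Fin r → Bool) (a : Fin s → Bool)
    (hones : bweight x ≤ bweight a) (hzeros : r - bweight x ≤ s - bweight a) :
    ∃ ι : Fin r → Fin s, Function.Injective ι ∧ a ∘ ι = x :=
  exists_injective_comp_eq_of_card_fiber_le x a fun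
    | true => by rwa [card_subtype_eq_true, card_subtype_eq_true]
    | false => by rwa [card_subtype_eq_false, card_subtype_eq_false]

theorem bweight_comp_le {r s : ℕ} (a : Fin s → Bool) {ι : Fin r → Fin s}
    (hι : Function.Injective ι) : bweight (a ∘ ι) ≤ bweight a := by
  rw [← card_subtype_eq_true, ← card_subtype_eq_true]
  exact Fintype.card_le_of_injective (fun i => ⟨ι i.1, i.2⟩) fun i j hij =>
    Subtype.ext (hι (congrArg Subtype.val hij))

theorem fsym_eq_true_iff {h : ℕ} (f : (Fin h → Bool) → Bool) (x : Fin h → Bool) :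
    fsym f x = true ↔ ∀ σ : Equiv.Perm (Fin h), f (x ∘ σ) = true :=
  decide_eq_true_iff

theorem fsym_eq_false_of_eq_false {h : ℕ} {f : (Fin h → Bool) → Bool} {x : Fin h → Bool}
    (hx : f x = false) : fsym f x = false := by
  rw [← Bool.not_eq_true, fsym_eq_true_iff, not_forall]
  exact ⟨1, by simpa using hx⟩

theorem lessThan_gadget_general (h : ℕ) (f : (Fin h → Bool) → Bool)
    (c : ℕ)
    (hc_ex : ∃ x : Fin h → Bool, f x = false ∧ bweight x = c)
    (hc_min : ∀ x : Fin h → Bool, f x = false → c ≤ bweight x)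
    (k : ℕ) (a : Fin (k + h) → Bool) (ha : bweight a ≤ k) :
    (∀ ι : Fin h → Fin (k + h), Function.Injective ι → fsym f (a ∘ ι) = true) ↔
      bweight a < c := by
  constructor
  · intro hsat
    by_contra! hca
    obtain ⟨x, hfx, rfl⟩ := hc_ex
    obtain ⟨ι, hι, hax⟩ := exists_injective_comp_eq_of_bweight_le x a hca (by omega)
    have := hsat ι hι
    rw [hax, fsym_eq_false_of_eq_false hfx] at this
    exact Bool.false_ne_true this
  · intro hac ι hι
    rw [fsym_eq_true_iff]
    intro σ
    by_contra hfalse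
    have hviol := hc_min _ (Bool.eq_false_iff.mpr hfalse)
    have hle : bweight (a ∘ (ι ∘ σ)) ≤ bweight a := bweight_comp_le a (hι.comp σ.injective)
    exact absurd hac (not_lt.mpr (hviol.trans hle))

/-- **The `LessThan^K_c` gadget.** Let `f` be a 0-valid, non-trivial Boolean constraint function
of arity `h ≥ 1` with `u_min(f) = c`, and let `K = k + h`. Then an assignment
`a : Fin K → Bool` of weight at most `k` satisfies all constraints `f_sym` placed on injectively
chosen `h`-tuples of the `K` variables if and only if its weight is strictly less than `c`. -/
theorem lessThan_gadget (h : ℕ) (hh : 1 ≤ h) (f : (Fin h → Bool) → Bool)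
    (h0valid : f (fun _ => false) = true)
    (c : ℕ)
    (hc_ex : ∃ x : Fin h → Bool, f x = false ∧ bweight x = c)
    (hc_min : ∀ x : Fin h → Bool, f x = false → c ≤ bweight x)
    (k : ℕ) (a : Fin (k + h) → Bool) (ha : bweight a ≤ k) :
    (∀ ι : Fin h → Fin (k + h), Function.Injective ι → fsym f (a ∘ ι) = true) ↔
      bweight a < c :=
  lessThan_gadget_general h f c hc_ex hc_min k a ha
end

section
/- Let c ≥ 2, k ≥ 1 and K be integers with K ≥ k + c + 1. Let X and Y be disjoint finite sets with |X| ≥ k and |Y| ≥ K − c, and let E be a set of c-element subsets of X. Then the following are equivalent: (i) there exists an assignment a : X → {0,1} of weight exactly k such that for every e ∈ E, not all elements of e receive value 1; (ii) there exists an assignment a' : X ∪ Y → {0,1} of weight exactly k such that for every e ∈ E and every (K−c)-element subset T ⊆ Y, strictly fewer than c elements of e ∪ T receive value 1 under a'. -/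
/-!
Both sides amount to a `k`-subset `S ⊆ X` containing no `e ∈ E`. From such an `S`, the indicator
of `S` solves (ii): a set `T ⊆ Y` carries no ones, and `e` is not entirely ones. Conversely, let
`t` be the number of ones that a solution of (ii) puts on `Y`; since `t ≤ k < K - c`, some
`T ⊆ Y` of size `K - c` contains all of them, so every `e ∈ E` carries fewer than `c - t` ones.
Moving these `t` ones from `Y` to fresh elements of `X` (possible as `k ≤ |X|`) therefore leaves
every `e` short of being all ones.
-/

open Finset

section

variable {α : Type*} [DecidableEq α]

theorem exists_nand_solution_iff_exists_subset (X : Finset α) (k : ℕ) (E : Finset (Finset α)) :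
    (∃ a : α → Bool, (X.filter fun v => a v = true).card = k ∧ ∀ e ∈ E, ∃ v ∈ e, a v = false) ↔
      ∃ S ⊆ X, S.card = k ∧ ∀ e ∈ E, ¬ e ⊆ S := by
  constructor
  · rintro ⟨a, ha, hE⟩
    refine ⟨X.filter fun v => a v = true, filter_subset _ _, ha, fun e he heS => ?_⟩
    obtain ⟨v, hv, hav⟩ := hE e he
    simpa [hav] using (mem_filter.mp (heS hv)).2
  · rintro ⟨S, hSX, hS, hE⟩
    refine ⟨fun v => decide (v ∈ S), ?_, fun e he => ?_⟩
    · simp only [decide_eq_true_eq, filter_mem_eq_inter]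
      rwa [inter_eq_right.mpr hSX]
    · simpa [not_subset] using hE e he

theorem exists_lessThan_solution_of_subset {X Y S : Finset α} {k c : ℕ} {E : Finset (Finset α)}
    (hXY : Disjoint X Y) (hSX : S ⊆ X) (hS : S.card = k) (hE : ∀ e ∈ E, e.card = c)
    (hSE : ∀ e ∈ E, ¬ e ⊆ S) :
    ∃ a' : α → Bool, ((X ∪ Y).filter fun v => a' v = true).card = k ∧
      ∀ e ∈ E, ∀ T ⊆ Y, ((e ∪ T).filter fun v => a' v = true).card < c := by
  refine ⟨fun v => decide (v ∈ S), ?_, fun e he T hT => ?_⟩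
  · simp only [decide_eq_true_eq, filter_mem_eq_inter]
    rwa [inter_eq_right.mpr (hSX.trans subset_union_left)]
  · have hTS : T ∩ S = ∅ := disjoint_iff_inter_eq_empty.mp
      ((hXY.mono hSX hT).symm)
    simp only [decide_eq_true_eq, filter_mem_eq_inter, union_inter_distrib_right, hTS,
      union_empty]
    rw [← hE e he]
    exact card_lt_card ⟨inter_subset_left, fun h => hSE e he (h.trans inter_subset_right)⟩

theorem card_filter_add_card_filter_lt {p : α → Prop} [DecidablePred p] {X Y e : Finset α}
    {m c : ℕ} (hXY : Disjoint X Y) (he : e ⊆ X) (hm : (Y.filter p).card ≤ m) (hmY : m ≤ Y.card)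
    (h : ∀ T ⊆ Y, T.card = m → ((e ∪ T).filter p).card < c) :
    (e.filter p).card + (Y.filter p).card < c := by
  obtain ⟨T, hYT, hTY, hT⟩ := exists_subsuperset_card_eq (filter_subset p Y) hm hmY
  have hTp : T.filter p = Y.filter p :=
    (filter_subset_filter p hTY).antisymm fun v hv => mem_filter.mpr ⟨hYT hv, (mem_filter.mp hv).2⟩
  have hdisj : Disjoint (e.filter p) (T.filter p) :=
    disjoint_filter_filter ((hXY.mono_left he).mono_right hTY)
  have hlt := h T hTY hT
  rwa [filter_union, card_union_of_disjoint hdisj, hTp] at hlt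

theorem exists_subset_card_eq_not_superset {p : α → Prop} [DecidablePred p] {X : Finset α}
    {E : Finset (Finset α)} {k t : ℕ} (hk : (X.filter p).card + t = k) (hX : k ≤ X.card)
    (hE : ∀ e ∈ E, (e.filter p).card + t < e.card) :
    ∃ S ⊆ X, S.card = k ∧ ∀ e ∈ E, ¬ e ⊆ S := by
  obtain ⟨S, hAS, hSX, hS⟩ := exists_subsuperset_card_eq (filter_subset p X) (by omega) hX
  refine ⟨S, hSX, hS, fun e he heS => (hE e he).not_ge ?_⟩
  have hcover : e ⊆ e.filter p ∪ (S \ X.filter p) := fun v hv => by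
    by_cases hpv : p v
    · exact mem_union_left _ (mem_filter.mpr ⟨hv, hpv⟩)
    · exact mem_union_right _ (mem_sdiff.mpr ⟨heS hv, fun h => hpv (mem_filter.mp h).2⟩)
  calc e.card ≤ (e.filter p ∪ (S \ X.filter p)).card := card_le_card hcover
    _ ≤ (e.filter p).card + (S \ X.filter p).card := card_union_le _ _
    _ = (e.filter p).card + t := by rw [card_sdiff_of_subset hAS]; omega

end

theorem dense_embedding_correct_general (α : Type) [DecidableEq α] (c k K : ℕ)
    (hK : k + c + 1 ≤ K)
    (X Y : Finset α) (hXY : Disjoint X Y) (hX : k ≤ X.card) (hY : K - c ≤ Y.card)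
    (E : Finset (Finset α)) (hE : ∀ e ∈ E, e ⊆ X ∧ e.card = c) :
    (∃ a : α → Bool,
        (X.filter fun v => a v = true).card = k ∧
        ∀ e ∈ E, ∃ v ∈ e, a v = false) ↔
      ∃ a' : α → Bool,
        ((X ∪ Y).filter fun v => a' v = true).card = k ∧
        ∀ e ∈ E, ∀ T ⊆ Y, T.card = K - c →
          ((e ∪ T).filter fun v => a' v = true).card < c := by
  rw [exists_nand_solution_iff_exists_subset]
  constructor
  · rintro ⟨S, hSX, hS, hSE⟩
    obtain ⟨a', ha', hlt⟩ :=
      exists_lessThan_solution_of_subset hXY hSX hS (fun e he => (hE e he).2) hSE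
    exact ⟨a', ha', fun e he T hT _ => hlt e he T hT⟩
  · rintro ⟨a', ha', hlt⟩
    have hweight : (X.filter fun v => a' v = true).card
        + (Y.filter fun v => a' v = true).card = k := by
      rwa [filter_union, card_union_of_disjoint (disjoint_filter_filter hXY)] at ha'
    refine exists_subset_card_eq_not_superset hweight hX fun e he => ?_
    rw [(hE e he).2]
    exact card_filter_add_card_filter_lt hXY (hE e he).1 (by omega) hY (hlt e he)

/-- **Correctness of the Dense Embedding.** Let `c ≥ 2`, `k ≥ 1`, `K ≥ k + c + 1`, and let `X`,
`Y` be disjoint finite sets with `|X| ≥ k`, `|Y| ≥ K - c`, and `E` a set of `c`-element subsets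
of `X`. Then `E` (viewed as NAND_c constraints) has a weight-`k` solution over `X` iff the
LessThan-type constraints of the dense embedding have a weight-`k` solution over `X ∪ Y`. -/
theorem dense_embedding_correct (α : Type) [DecidableEq α] (c k K : ℕ)
    (hc : 2 ≤ c) (hk : 1 ≤ k) (hK : k + c + 1 ≤ K)
    (X Y : Finset α) (hXY : Disjoint X Y) (hX : k ≤ X.card) (hY : K - c ≤ Y.card)
    (E : Finset (Finset α)) (hE : ∀ e ∈ E, e ⊆ X ∧ e.card = c) :
    (∃ a : α → Bool,
        (X.filter fun v => a v = true).card = k ∧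
        ∀ e ∈ E, ∃ v ∈ e, a v = false) ↔
      ∃ a' : α → Bool,
        ((X ∪ Y).filter fun v => a' v = true).card = k ∧
        ∀ e ∈ E, ∀ T ⊆ Y, T.card = K - c →
          ((e ∪ T).filter fun v => a' v = true).card < c :=
  dense_embedding_correct_general α c k K hK X Y hXY hX hY E hE
end

section
/- Let k ≥ 1, r ≥ 3 and i ≥ r+1 be integers. Let H* be a k-partite r-uniform hypergraph with pairwise disjoint parts V₁,…,V_k (every hyperedge of H* is an r-element subset of V₁ ∪ ⋯ ∪ V_k with at most one vertex in each part), with hyperedge set E*, and let d₁,…,d_{i−r−1} be distinct fresh vertices not in any part. Define the hypergraph H with vertex set V₁ ∪ ⋯ ∪ V_k ∪ {d₁,…,d_{i−r−1}} and hyperedge set E*_{(k)} ∪ ⋃_{j=1}^{k} { all 2-element subsets of V_j } ∪ { {v} ∪ {d₁,…,d_{i−r−1}} ∪ e : e ∈ E*, v ∈ V_k }, where E*_{(k)} is the set of hyperedges of H* containing a vertex of V_k. Then H contains an independent set of cardinality k + i − r − 1 if and only if there exist x₁ ∈ V₁, …, x_k ∈ V_k such that {x₁,…,x_k} contains no hyperedge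 of H*. -/
/-!
The pair hyperedges force an independent set of `H` to meet each part at most once, so one with
`k + |D|` vertices, `D` the set of dummies, must contain all of `D` and exactly one vertex `x_j` of
each part `V_j`; the hyperedges `{x_k} ∪ D ∪ e` then forbid every `e ∈ E*` inside `{x₁, …, x_k}`.
Conversely, if `{x₁, …, x_k}` contains no `e ∈ E*`, then `{x₁, …, x_k} ∪ D` is independent: it
contains no pair, and a hyperedge of `H*` inside it avoids the fresh dummies, hence lies in
`{x₁, …, x_k}`.
-/

open Finset Function

attribute [local instance] Classical.propDecidable

section Parts

variable {α ι : Type*} [DecidableEq α] [Fintype ι] {V : ι → Finset α}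

theorem forall_not_subset_pairs_iff (X : Finset α) :
    (∀ e ∈ univ.biUnion fun j => ((V j ×ˢ V j).filter fun q => q.1 ≠ q.2).image
        fun q => ({q.1, q.2} : Finset α), ¬ e ⊆ X) ↔ ∀ j, #(X ∩ V j) ≤ 1 := by
  refine ⟨fun h j => card_le_one.2 fun a ha b hb => ?_, fun h e he hsub => ?_⟩
  · rw [mem_inter] at ha hb
    by_contra hab
    refine h {a, b} (mem_biUnion.2 ⟨j, mem_univ j, mem_image.2 ⟨(a, b), ?_, rfl⟩⟩) ?_
    · exact mem_filter.2 ⟨mem_product.2 ⟨ha.2, hb.2⟩, hab⟩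
    · exact insert_subset ha.1 (singleton_subset_iff.2 hb.1)
  · obtain ⟨j, -, he⟩ := mem_biUnion.1 he
    obtain ⟨⟨a, b⟩, hab, rfl⟩ := mem_image.1 he
    obtain ⟨hab, hne⟩ := mem_filter.1 hab
    obtain ⟨ha, hb⟩ := mem_product.1 hab
    rw [insert_subset_iff, singleton_subset_iff] at hsub
    exact hne (card_le_one.1 (h j) a (mem_inter.2 ⟨hsub.1, ha⟩) b (mem_inter.2 ⟨hsub.2, hb⟩))

theorem card_inter_biUnion_le_sum (X : Finset α) : #(X ∩ univ.biUnion V) ≤ ∑ j, #(X ∩ V j) := by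
  rw [inter_biUnion]
  exact card_biUnion_le

theorem card_inter_eq_one_of_card_inter_biUnion_ge {X : Finset α} (hX : ∀ j, #(X ∩ V j) ≤ 1)
    (h : Fintype.card ι ≤ #(X ∩ univ.biUnion V)) (j : ι) : #(X ∩ V j) = 1 := by
  have hsum : ∑ j, #(X ∩ V j) = ∑ _j : ι, 1 :=
    le_antisymm (sum_le_sum fun j _ => hX j) (by simpa using h.trans (card_inter_biUnion_le_sum X))
  exact (sum_eq_sum_iff_of_le fun j _ => hX j).1 hsum j (mem_univ j)

theorem subset_and_card_inter_eq_one_of_card_eq {X D : Finset α} (hXsub : X ⊆ univ.biUnion V ∪ D)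
    (hX : ∀ j, #(X ∩ V j) ≤ 1) (hcard : #X = Fintype.card ι + #D) :
    D ⊆ X ∧ ∀ j, #(X ∩ V j) = 1 := by
  have hsplit : #X ≤ #(X ∩ univ.biUnion V) + #(X ∩ D) := by
    calc #X = #(X ∩ univ.biUnion V ∪ X ∩ D) := by
          rw [← inter_union_distrib_left, inter_eq_left.2 hXsub]
      _ ≤ _ := card_union_le _ _
  have hparts : #(X ∩ univ.biUnion V) ≤ Fintype.card ι := by
    simpa using (card_inter_biUnion_le_sum X).trans (sum_le_sum fun j _ => hX j)
  have hdummies : #(X ∩ D) ≤ #D := card_le_card inter_subset_right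
  refine ⟨inter_eq_right.1 (eq_of_subset_of_card_le inter_subset_right (by omega)),
    card_inter_eq_one_of_card_inter_biUnion_ge hX (by omega)⟩

omit [DecidableEq α] [Fintype ι] in
theorem injective_of_forall_mem (hV : Pairwise (Disjoint on V)) {x : ι → α}
    (hx : ∀ j, x j ∈ V j) : Injective x := by
  intro j₁ j₂ h
  by_contra hne
  exact disjoint_left.1 (hV hne) (h ▸ hx j₁) (hx j₂)

theorem eq_of_mem_image_of_mem (hV : Pairwise (Disjoint on V)) {x : ι → α}
    (hx : ∀ j, x j ∈ V j) {a : α} {j : ι} (ha : a ∈ univ.image x) (haj : a ∈ V j) : a = x j := by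
  obtain ⟨j', -, rfl⟩ := mem_image.1 ha
  by_contra hne
  exact disjoint_left.1 (hV fun h : j' = j => hne (h ▸ rfl)) (hx j') haj

theorem exists_independent_of_transversal (hV : Pairwise (Disjoint on V)) {E : Finset (Finset α)}
    (hE : ∀ e ∈ E, e ⊆ univ.biUnion V) {D : Finset α} (hD : ∀ j, Disjoint D (V j))
    {x : ι → α} (hx : ∀ j, x j ∈ V j) (hxE : ∀ e ∈ E, ¬ e ⊆ univ.image x) :
    ∃ X ⊆ univ.biUnion V ∪ D, #X = Fintype.card ι + #D ∧ (∀ j, #(X ∩ V j) ≤ 1) ∧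
      ∀ e ∈ E, ¬ e ⊆ X := by
  have hmem : ∀ a ∈ univ.image x ∪ D, ∀ j, a ∈ V j → a = x j := by
    intro a ha j haj
    rcases mem_union.1 ha with ha | ha
    · exact eq_of_mem_image_of_mem hV hx ha haj
    · exact absurd haj (disjoint_left.1 (hD j) ha)
  refine ⟨univ.image x ∪ D, union_subset_union ?_ subset_rfl, ?_, ?_, ?_⟩
  · exact image_subset_iff.2 fun j _ => mem_biUnion.2 ⟨j, mem_univ j, hx j⟩
  · have hdisj : Disjoint (univ.image x) D :=
      disjoint_left.2 fun a ha haD => by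
        obtain ⟨j, -, rfl⟩ := mem_image.1 ha
        exact disjoint_left.1 (hD j) haD (hx j)
    rw [card_union_of_disjoint hdisj, card_image_of_injective _ (injective_of_forall_mem hV hx),
      card_univ]
  · exact fun j => card_le_one.2 fun a ha b hb =>
      (hmem a (mem_inter.1 ha).1 j (mem_inter.1 ha).2).trans
        (hmem b (mem_inter.1 hb).1 j (mem_inter.1 hb).2).symm
  · intro e he hsub
    refine hxE e he fun a ha => ?_
    obtain ⟨j, -, haj⟩ := mem_biUnion.1 (hE e he ha)
    exact hmem a (hsub ha) j haj ▸ mem_image_of_mem x (mem_univ j)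

theorem exists_transversal_of_independent {E : Finset (Finset α)} {D X : Finset α}
    (hXsub : X ⊆ univ.biUnion V ∪ D) (hcard : #X = Fintype.card ι + #D)
    (hX : ∀ j, #(X ∩ V j) ≤ 1) (l : ι) (hapex : ∀ e ∈ E, ∀ v ∈ V l, ¬ insert v (D ∪ e) ⊆ X) :
    ∃ x : ι → α, (∀ j, x j ∈ V j) ∧ ∀ e ∈ E, ¬ e ⊆ univ.image x := by
  obtain ⟨hDX, hone⟩ := subset_and_card_inter_eq_one_of_card_eq hXsub hX hcard
  choose x hx using fun j => card_eq_one.1 (hone j)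
  have hxX : ∀ j, x j ∈ X ∧ x j ∈ V j := fun j => by
    rw [← mem_inter, hx j]
    exact mem_singleton_self (x j)
  refine ⟨x, fun j => (hxX j).2, fun e he hsub => hapex e he (x l) (hxX l).2 ?_⟩
  refine insert_subset (hxX l).1 (union_subset hDX (hsub.trans ?_))
  exact image_subset_iff.2 fun j _ => (hxX j).1

end Parts

/-- **Arity-sensitive lower bound construction.** Let `k ≥ 1`, `r ≥ 3`, `i ≥ r + 1`. Given a
`k`-partite `r`-uniform hypergraph `H*` with pairwise disjoint parts `V₁, …, V_k` and hyperedge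
set `E*`, and fresh distinct dummy vertices `d₁, …, d_{i-r-1}`, form the hypergraph `H` with
vertex set `V₁ ∪ ⋯ ∪ V_k ∪ {d₁,…,d_{i-r-1}}` and hyperedges: the hyperedges of `H*` meeting
`V_k`, all 2-element subsets within each part, and the sets `{v} ∪ {d₁,…,d_{i-r-1}} ∪ e` for
`e ∈ E*` and `v ∈ V_k`. Then `H` has an independent set of cardinality `k + i - r - 1` iff
there are `x₁ ∈ V₁, …, x_k ∈ V_k` with `{x₁,…,x_k}` containing no hyperedge of `H*`. -/
theorem arity_sensitive_embedding (α : Type) [DecidableEq α] (k r i : ℕ)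
    (hk : 1 ≤ k) (hi : r + 1 ≤ i)
    (Vp : Fin k → Finset α)
    (hVp : ∀ j₁ j₂ : Fin k, j₁ ≠ j₂ → Disjoint (Vp j₁) (Vp j₂))
    (Estar : Finset (Finset α))
    (hEstar : ∀ e ∈ Estar, e.card = r ∧ e ⊆ Finset.univ.biUnion Vp ∧
      ∀ j : Fin k, (e ∩ Vp j).card ≤ 1)
    (d : Fin (i - r - 1) → α) (hd : Function.Injective d)
    (hdfresh : ∀ j : Fin k, Disjoint (Finset.image d Finset.univ) (Vp j)) :
    (∃ X : Finset α,
        X ⊆ Finset.univ.biUnion Vp ∪ Finset.image d Finset.univ ∧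
        X.card = k + i - r - 1 ∧
        ∀ e ∈ (Estar.filter fun e => ∃ v ∈ Vp ⟨k - 1, by omega⟩, v ∈ e) ∪
            (Finset.univ.biUnion fun j : Fin k =>
              ((Vp j ×ˢ Vp j).filter fun q => q.1 ≠ q.2).image
                fun q => ({q.1, q.2} : Finset α)) ∪
            ((Estar ×ˢ Vp ⟨k - 1, by omega⟩).image fun q =>
              insert q.2 (Finset.image d Finset.univ ∪ q.1)),
          ¬ e ⊆ X) ↔
      ∃ x : Fin k → α, (∀ j : Fin k, x j ∈ Vp j) ∧
        ∀ e ∈ Estar, ¬ e ⊆ Finset.image x Finset.univ := by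
  have hcard : k + i - r - 1 = Fintype.card (Fin k) + #(univ.image d) := by
    rw [card_image_of_injective _ hd, Fintype.card_fin, card_univ, Fintype.card_fin]
    omega
  simp only [forall_mem_union, forall_not_subset_pairs_iff, forall_mem_image, mem_product,
    Prod.forall, mem_filter, and_imp, hcard]
  constructor
  · rintro ⟨X, hXsub, hXcard, ⟨-, hpairs⟩, hapex⟩
    exact exists_transversal_of_independent hXsub hXcard hpairs _
      fun e he v hv => hapex e v he hv
  · rintro ⟨x, hx, hxE⟩
    obtain ⟨X, hXsub, hXcard, hpairs, hXE⟩ := exists_independent_of_transversal hVp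
      (fun e he => (hEstar e he).2.1) hdfresh hx hxE
    refine ⟨X, hXsub, hXcard, ⟨fun e he _ => hXE e he, hpairs⟩, ?_⟩
    exact fun e v he _ hsub =>
      hXE e he ((subset_union_right.trans (subset_insert v _)).trans hsub)
end

section
/- Let F be a finite family of non-trivial, 0-valid Boolean constraint functions, let k ∈ ℕ, and for each f ∈ F let ε_f > 0 and C_f > 0 be reals. Then there exists n₀ ∈ ℕ such that for all n ≥ n₀: every instance over F on n variables in which, for each f ∈ F, the number of f-constraints is at most C_f · n^{u_min(f) − ε_f}, admits a satisfying assignment of weight exactly k. -/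
open Finset Filter Function

namespace Finset

variable {α : Type*} [DecidableEq α]

theorem card_filter_subset_powersetCard_le (s U : Finset α) (k : ℕ) :
    #{S ∈ s.powersetCard k | U ⊆ S} ≤ (#s).choose (k - #U) := by
  rw [← card_powersetCard]
  refine card_le_card_of_injOn (· \ U) (fun S hS => ?_) (fun S₁ hS₁ S₂ hS₂ h => ?_)
  · simp only [coe_filter, mem_powersetCard, Set.mem_ofPred_eq, mem_coe] at hS ⊢
    exact ⟨sdiff_subset.trans hS.1.1, by rw [card_sdiff_of_subset hS.2, hS.1.2]⟩
  · simp only [coe_filter, Set.mem_ofPred_eq] at hS₁ hS₂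
    rw [← sdiff_union_of_subset hS₁.2, ← sdiff_union_of_subset hS₂.2]
    exact congrArg (· ∪ U) h

theorem card_filter_le_card_inter_powersetCard_le (s T : Finset α) (k u : ℕ) :
    #{S ∈ s.powersetCard k | u ≤ #(S ∩ T)} ≤ (#T).choose u * (#s).choose (k - u) := by
  have hcover : {S ∈ s.powersetCard k | u ≤ #(S ∩ T)} ⊆
      (T.powersetCard u).biUnion fun U => {S ∈ s.powersetCard k | U ⊆ S} := by
    intro S hS
    rw [mem_filter] at hS
    obtain ⟨U, hUS, hU⟩ := exists_subset_card_eq hS.2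
    exact mem_biUnion.2 ⟨U, mem_powersetCard.2 ⟨hUS.trans inter_subset_right, hU⟩,
      mem_filter.2 ⟨hS.1, hUS.trans inter_subset_left⟩⟩
  calc _ ≤ _ := card_le_card hcover
    _ ≤ #(T.powersetCard u) * (#s).choose (k - u) :=
      card_biUnion_le_card_mul _ _ _ fun U hU =>
        (mem_powersetCard.1 hU).2 ▸ card_filter_subset_powersetCard_le s U k
    _ = (#T).choose u * (#s).choose (k - u) := by rw [card_powersetCard]

theorem exists_mem_forall_notMem_of_sum_card_lt {β γ : Type*} [DecidableEq γ]
    {𝒮 : Finset γ} {Φ : Finset β} (bad : β → Finset γ) (h : ∑ p ∈ Φ, #(bad p) < #𝒮) :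
    ∃ S ∈ 𝒮, ∀ p ∈ Φ, S ∉ bad p := by
  have : ¬ 𝒮 ⊆ Φ.biUnion bad := fun hsub =>
    (card_le_card hsub |>.trans card_biUnion_le).not_gt h
  simpa [not_subset] using this

end Finset

namespace Nat

theorem choose_sub_mul_pow_le {n k : ℕ} (hkn : k ≤ n) {u : ℕ} (hu : u ≤ k) :
    n.choose (k - u) * (n + 1 - k) ^ u ≤ n.choose k * k ^ u := by
  induction u with
  | zero => simp
  | succ u ih =>
    have hstep : n.choose (k - (u + 1)) * (n + 1 - k) ≤ n.choose (k - u) * k := by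
      have hpascal := choose_succ_right_eq n (k - (u + 1))
      rw [show k - (u + 1) + 1 = k - u by omega] at hpascal
      calc n.choose (k - (u + 1)) * (n + 1 - k)
          ≤ n.choose (k - (u + 1)) * (n - (k - (u + 1))) := Nat.mul_le_mul_left _ (by omega)
        _ = n.choose (k - u) * (k - u) := hpascal.symm
        _ ≤ n.choose (k - u) * k := Nat.mul_le_mul_left _ (by omega)
    calc n.choose (k - (u + 1)) * (n + 1 - k) ^ (u + 1)
        = n.choose (k - (u + 1)) * (n + 1 - k) * (n + 1 - k) ^ u := by ring
      _ ≤ n.choose (k - u) * k * (n + 1 - k) ^ u := Nat.mul_le_mul_right _ hstep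
      _ = k * (n.choose (k - u) * (n + 1 - k) ^ u) := by ring
      _ ≤ k * (n.choose k * k ^ u) := Nat.mul_le_mul_left _ (ih (by omega))
      _ = n.choose k * k ^ (u + 1) := by ring

theorem choose_sub_mul_pow_le_of_two_mul_lt {n k u : ℕ} (hn : 2 * k < n) (hu : u ≤ k) :
    n.choose (k - u) * n ^ u ≤ n.choose k * (2 * k) ^ u :=
  calc n.choose (k - u) * n ^ u
      ≤ n.choose (k - u) * (2 * (n + 1 - k)) ^ u :=
        Nat.mul_le_mul_left _ (Nat.pow_le_pow_left (by omega) u)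
    _ = 2 ^ u * (n.choose (k - u) * (n + 1 - k) ^ u) := by ring
    _ ≤ 2 ^ u * (n.choose k * k ^ u) :=
      Nat.mul_le_mul_left _ (choose_sub_mul_pow_le (by omega) hu)
    _ = n.choose k * (2 * k) ^ u := by ring

end Nat

theorem eventually_sum_mul_rpow_neg_lt_one {ι : Type*} [Fintype ι] (D ε : ι → ℝ)
    (hε : ∀ i, 0 < ε i) : ∀ᶠ n : ℕ in atTop, ∑ i, D i * (n : ℝ) ^ (-ε i) < 1 := by
  have hlim : Tendsto (fun n : ℕ => ∑ i, D i * (n : ℝ) ^ (-ε i)) atTop (nhds 0) := by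
    rw [← sum_const_zero (s := (univ : Finset ι))]
    refine tendsto_finsetSum _ fun i _ => ?_
    simpa using
      ((tendsto_rpow_neg_atTop (hε i)).comp tendsto_natCast_atTop_atTop).const_mul (D i)
  exact hlim.eventually_lt_const one_pos

theorem bweight_decide_comp_mem {r : ℕ} {α : Type*} [DecidableEq α] {g : Fin r → α}
    (hg : Injective g) (S : Finset α) :
    bweight (fun j => decide (g j ∈ S)) = #(S ∩ univ.image g) := by
  rw [inter_comm, ← filter_mem_eq_inter, filter_image, card_image_of_injective _ hg]
  simp [bweight]

section SparseCSP

variable {ι : Type*} {arity : ι → ℕ} (u : ι → ℕ) {n : ℕ} (k : ℕ)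

def hittingSets (p : (i : ι) × (Fin (arity i) → Fin n)) : Finset (Finset (Fin n)) :=
  {S ∈ univ.powersetCard k | u p.1 ≤ #(S ∩ univ.image p.2)}

variable {u k}

theorem hittingSets_eq_empty {p : (i : ι) × (Fin (arity i) → Fin n)} (h : k < u p.1) :
    hittingSets u k p = ∅ :=
  filter_eq_empty_iff.2 fun _ hS hu =>
    (h.trans_le hu).not_ge
      ((card_le_card inter_subset_left).trans (mem_powersetCard.1 hS).2.le)

theorem card_hittingSets_le {p : (i : ι) × (Fin (arity i) → Fin n)} (hp : Injective p.2) :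
    #(hittingSets u k p) ≤ (arity p.1).choose (u p.1) * n.choose (k - u p.1) := by
  simpa [hittingSets, card_image_of_injective _ hp] using
    card_filter_le_card_inter_powersetCard_le univ (univ.image p.2) k (u p.1)

theorem apply_decide_mem_eq_true_of_notMem_hittingSets
    {fn : (i : ι) → (Fin (arity i) → Bool) → Bool}
    (hu_min : ∀ i x, fn i x = false → u i ≤ bweight x)
    {p : (i : ι) × (Fin (arity i) → Fin n)} (hp : Injective p.2) {S : Finset (Fin n)}
    (hSk : S ∈ univ.powersetCard k) (hS : S ∉ hittingSets u k p) :
    fn p.1 (fun j => decide (p.2 j ∈ S)) = true := by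
  by_contra h
  rw [Bool.not_eq_true] at h
  exact hS (mem_filter.2 ⟨hSk, bweight_decide_comp_mem hp S ▸ hu_min _ _ h⟩)

theorem sum_card_hittingSets_le {i : ι} {C ε : ℝ} (hn : 2 * k < n)
    {Ψ : Finset ((i : ι) × (Fin (arity i) → Fin n))} (hΨ : ∀ p ∈ Ψ, p.1 = i ∧ Injective p.2)
    (hcard : (#Ψ : ℝ) ≤ C * (n : ℝ) ^ ((u i : ℝ) - ε)) :
    (∑ p ∈ Ψ, #(hittingSets u k p) : ℝ) ≤
      C * (arity i).choose (u i) * (2 * k) ^ u i * (n : ℝ) ^ (-ε) * n.choose k := by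
  have hn₀ : (0 : ℝ) < n := by exact_mod_cast (Nat.zero_le _).trans_lt hn
  have hC : 0 ≤ C :=
    nonneg_of_mul_nonneg_left ((Nat.cast_nonneg _).trans hcard) (Real.rpow_pos_of_pos hn₀ _)
  rcases lt_or_ge k (u i) with hk | hk
  · rw [sum_eq_zero fun p hp => by simp [hittingSets_eq_empty ((hΨ p hp).1 ▸ hk)]]
    positivity
  have hsum :
      ∑ p ∈ Ψ, #(hittingSets u k p) ≤ #Ψ * ((arity i).choose (u i) * n.choose (k - u i)) :=
    sum_le_card_nsmul _ _ _ fun p hp => (hΨ p hp).1 ▸ card_hittingSets_le (hΨ p hp).2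
  have hchoose : (n.choose (k - u i) * n ^ u i : ℝ) ≤ n.choose k * (2 * k) ^ u i := by
    exact_mod_cast Nat.choose_sub_mul_pow_le_of_two_mul_lt hn hk
  calc (∑ p ∈ Ψ, #(hittingSets u k p) : ℝ)
      ≤ #Ψ * ((arity i).choose (u i) * n.choose (k - u i)) := by exact_mod_cast hsum
    _ ≤ C * (n : ℝ) ^ ((u i : ℝ) - ε) * ((arity i).choose (u i) * n.choose (k - u i)) := by
      gcongr
    _ = C * (arity i).choose (u i) * (n : ℝ) ^ (-ε) * (n.choose (k - u i) * n ^ u i) := by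
      rw [Real.rpow_sub hn₀, Real.rpow_neg hn₀.le, Real.rpow_natCast]
      ring
    _ ≤ C * (arity i).choose (u i) * (n : ℝ) ^ (-ε) * (n.choose k * (2 * k) ^ u i) := by
      gcongr
    _ = _ := by ring

theorem sum_card_hittingSets_lt_card_powersetCard [Fintype ι] [DecidableEq ι] {ε C : ι → ℝ}
    (hn : 2 * k < n)
    (hsmall : ∑ i, C i * (arity i).choose (u i) * (2 * k) ^ u i * (n : ℝ) ^ (-ε i) < 1)
    {Φ : Finset ((i : ι) × (Fin (arity i) → Fin n))} (hinj : ∀ p ∈ Φ, Injective p.2)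
    (hcount : ∀ i, (#{p ∈ Φ | p.1 = i} : ℝ) ≤ C i * (n : ℝ) ^ ((u i : ℝ) - ε i)) :
    ∑ p ∈ Φ, #(hittingSets u k p) < #(univ.powersetCard k : Finset (Finset (Fin n))) := by
  have hchoose : (0 : ℝ) < n.choose k := by exact_mod_cast Nat.choose_pos (by omega)
  rw [card_powersetCard, card_univ, Fintype.card_fin, ← Nat.cast_lt (α := ℝ), Nat.cast_sum,
    ← sum_fiberwise_of_maps_to (fun p _ => mem_univ p.1)]
  calc ∑ i, ∑ p ∈ Φ with p.1 = i, (#(hittingSets u k p) : ℝ)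
      ≤ ∑ i, C i * (arity i).choose (u i) * (2 * k) ^ u i * (n : ℝ) ^ (-ε i) * n.choose k :=
        sum_le_sum fun i _ => sum_card_hittingSets_le hn
          (fun p hp => ⟨(mem_filter.1 hp).2, hinj p (mem_filter.1 hp).1⟩) (hcount i)
    _ < 1 * n.choose k := by rw [← sum_mul]; gcongr
    _ = n.choose k := one_mul _

end SparseCSP

theorem sparse_zero_valid_csp_satisfiable_general (ι : Type) [Fintype ι] [DecidableEq ι]
    (arity : ι → ℕ) (fn : (i : ι) → (Fin (arity i) → Bool) → Bool)
    (u : ι → ℕ)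
    (hu_min : ∀ i : ι, ∀ x : Fin (arity i) → Bool, fn i x = false → u i ≤ bweight x)
    (k : ℕ) (ε C : ι → ℝ) (hε : ∀ i, 0 < ε i) :
    ∃ n₀ : ℕ, ∀ n : ℕ, n₀ ≤ n →
      ∀ Φ : Finset ((i : ι) × (Fin (arity i) → Fin n)),
        (∀ p ∈ Φ, Function.Injective p.2) →
        (∀ i : ι, ((Φ.filter fun p => p.1 = i).card : ℝ) ≤
          C i * (n : ℝ) ^ ((u i : ℝ) - ε i)) →
        ∃ a : Fin n → Bool,
          (Finset.univ.filter fun v => a v = true).card = k ∧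
          ∀ p ∈ Φ, fn p.1 (fun j => a (p.2 j)) = true := by
  obtain ⟨n₀, hn₀⟩ := eventually_atTop.1 <|
    (eventually_sum_mul_rpow_neg_lt_one
      (fun i => C i * (arity i).choose (u i) * (2 * k) ^ u i) ε hε).and
    (eventually_gt_atTop (2 * k))
  refine ⟨n₀, fun n hn Φ hinj hcount => ?_⟩
  obtain ⟨hsmall, hkn⟩ := hn₀ n hn
  obtain ⟨S, hSk, hS⟩ := exists_mem_forall_notMem_of_sum_card_lt _
    (sum_card_hittingSets_lt_card_powersetCard hkn hsmall hinj hcount)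
  refine ⟨fun v => decide (v ∈ S), by simpa using (mem_powersetCard.1 hSk).2, fun p hp => ?_⟩
  exact apply_decide_mem_eq_true_of_notMem_hittingSets hu_min (hinj p hp) hSk (hS p hp)

/-- **Sparse 0-valid CSPs are trivially satisfiable.** Let `F` be a finite family of
non-trivial, 0-valid Boolean constraint functions (indexed by `ι`, with `fn i` of arity
`arity i` and minimum violating weight `u i`), let `k ∈ ℕ` and, for each `f ∈ F`, reals
`ε_f > 0` and `C_f > 0`. Then there is `n₀` such that for all `n ≥ n₀`, every instance over
`F` on `n` variables in which the number of `f`-constraints is at most `C_f · n^(u(f) - ε_f)`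
admits a satisfying assignment of weight exactly `k`. -/
theorem sparse_zero_valid_csp_satisfiable (ι : Type) [Fintype ι] [DecidableEq ι]
    (arity : ι → ℕ) (fn : (i : ι) → (Fin (arity i) → Bool) → Bool)
    (h0valid : ∀ i : ι, fn i (fun _ => false) = true)
    (u : ι → ℕ)
    (hu_ex : ∀ i : ι, ∃ x : Fin (arity i) → Bool, fn i x = false ∧ bweight x = u i)
    (hu_min : ∀ i : ι, ∀ x : Fin (arity i) → Bool, fn i x = false → u i ≤ bweight x)
    (k : ℕ) (ε C : ι → ℝ) (hε : ∀ i, 0 < ε i) (hC : ∀ i, 0 < C i) :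
    ∃ n₀ : ℕ, ∀ n : ℕ, n₀ ≤ n →
      ∀ Φ : Finset ((i : ι) × (Fin (arity i) → Fin n)),
        (∀ p ∈ Φ, Function.Injective p.2) →
        (∀ i : ι, ((Φ.filter fun p => p.1 = i).card : ℝ) ≤
          C i * (n : ℝ) ^ ((u i : ℝ) - ε i)) →
        ∃ a : Fin n → Bool,
          (Finset.univ.filter fun v => a v = true).card = k ∧
          ∀ p ∈ Φ, fn p.1 (fun j => a (p.2 j)) = true :=
  sparse_zero_valid_csp_satisfiable_general ι arity fn u hu_min k ε C hε
end

section
/- Let F be a finite family of non-trivial Boolean constraint functions and let c := u_min(F). Then for every k ≥ c there exists a constant C > 0 and an n₀ ∈ ℕ such that for every n ≥ n₀ there is an instance over F on n variables with at least one and at most C · n^c constraints that admits no satisfying assignment of weight exactly k. -/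
open Finset Function

theorem card_sub_card_filter_true_le {β : Type*} [Fintype β] (a : β → Bool) (Z : Finset β) :
    #Z - #{v | a v = true} ≤ #{v ∈ Z | a v = false} := by
  have hsplit := card_filter_add_card_filter_not (s := Z) (fun v => a v = true)
  have hsub : #{v ∈ Z | a v = true} ≤ #{v | a v = true} :=
    card_le_card (filter_subset_filter _ (subset_univ Z))
  simp only [Bool.not_eq_true] at hsplit
  omega

section

variable {α β : Type*} [Fintype α] [DecidableEq α] [Fintype β] [DecidableEq β]

def patternScopes (x : α → Bool) (Z : Finset β) : Finset (α → β) :=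
  {p ∈ Fintype.piFinset fun j => if x j then univ else Z | Injective p}

theorem card_patternScopes_le (x : α → Bool) (Z : Finset β) :
    #(patternScopes x Z) ≤ (#Z + 1) ^ Fintype.card α * Fintype.card β ^ #{j | x j = true} :=
  calc #(patternScopes x Z)
      ≤ #(Fintype.piFinset fun j => if x j then univ else Z) := card_filter_le _ _
    _ = Fintype.card β ^ #{j | x j = true} * #Z ^ #{j | x j = false} := by
      simp [Fintype.card_piFinset, apply_ite card, prod_ite]
    _ ≤ Fintype.card β ^ #{j | x j = true} * (#Z + 1) ^ Fintype.card α := by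
      gcongr Fintype.card β ^ _ * ?_
      exact (Nat.pow_le_pow_left (by omega) _).trans
        (Nat.pow_le_pow_right (by omega) (card_le_univ _))
    _ = (#Z + 1) ^ Fintype.card α * Fintype.card β ^ #{j | x j = true} := mul_comm _ _

theorem exists_mem_patternScopes_comp_eq {x : α → Bool} {a : β → Bool} {Z : Finset β}
    (h₁ : #{j | x j = true} ≤ #{v | a v = true})
    (hZ : #{v | a v = true} + Fintype.card α ≤ #Z) :
    ∃ p ∈ patternScopes x Z, a ∘ p = x := by
  have h₀ : #{j | x j = false} ≤ #{v ∈ Z | a v = false} :=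
    calc #{j | x j = false} ≤ Fintype.card α := card_le_univ _
      _ ≤ #Z - #{v | a v = true} := by omega
      _ ≤ #{v ∈ Z | a v = false} := card_sub_card_filter_true_le a Z
  obtain ⟨e₁⟩ : Nonempty ({j // x j = true} ↪ ({v | a v = true} : Finset β)) :=
    Function.Embedding.nonempty_of_card_le (by rwa [Fintype.card_coe, Fintype.card_subtype])
  obtain ⟨e₀⟩ : Nonempty ({j // ¬ x j = true} ↪ ({v ∈ Z | a v = false} : Finset β)) :=
    Function.Embedding.nonempty_of_card_le <| by
      rw [Fintype.card_coe, Fintype.card_subtype]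
      simpa only [Bool.not_eq_true] using h₀
  let p : α → β := Sum.elim (Subtype.val ∘ e₁) (Subtype.val ∘ e₀) ∘ (Equiv.sumCompl _).symm
  have hp : ∀ j, (x j = true → a (p j) = true) ∧ (x j = false → p j ∈ Z ∧ a (p j) = false) := by
    intro j
    by_cases h : x j = true
    · simpa [p, Equiv.sumCompl_symm_apply_of_pos h, h] using mem_filter.1 (e₁ ⟨j, h⟩).2
    · simpa [p, Equiv.sumCompl_symm_apply_of_neg h, h] using mem_filter.1 (e₀ ⟨j, h⟩).2
  refine ⟨p, mem_filter.2 ⟨Fintype.mem_piFinset.2 fun j => ?_, ?_⟩, funext fun j => ?_⟩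
  · cases h : x j <;> simp [h, (hp j).2]
  · refine ((Subtype.val_injective.comp e₁.injective).sumElim
      (Subtype.val_injective.comp e₀.injective) fun u w huw => ?_).comp (Equiv.injective _)
    have hu := (mem_filter.1 (e₁ u).2).2
    have hw := (mem_filter.1 (e₀ w).2).2
    simp_all
  · cases h : x j <;> simp [h, hp j]

end

theorem non_trivial_at_cutoff_general (ι : Type)
    (arity : ι → ℕ) (fn : (i : ι) → (Fin (arity i) → Bool) → Bool)
    (c : ℕ)
    (hc_ex : ∃ i : ι, ∃ x : Fin (arity i) → Bool, fn i x = false ∧ bweight x = c)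
    (k : ℕ) (hk : c ≤ k) :
    ∃ C : ℝ, 0 < C ∧ ∃ n₀ : ℕ, ∀ n : ℕ, n₀ ≤ n →
      ∃ Φ : Finset ((i : ι) × (Fin (arity i) → Fin n)),
        (∀ p ∈ Φ, Function.Injective p.2) ∧
        Φ.Nonempty ∧
        ((Φ.card : ℝ) ≤ C * (n : ℝ) ^ c) ∧
        ¬ ∃ a : Fin n → Bool,
            (Finset.univ.filter fun v => a v = true).card = k ∧
            ∀ p ∈ Φ, fn p.1 (fun j => a (p.2 j)) = true := by
  obtain ⟨i, x, hx, rfl⟩ := hc_ex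
  refine ⟨((k + arity i + 1 : ℕ) : ℝ) ^ arity i, by positivity, k + arity i, fun n hn => ?_⟩
  obtain ⟨Z, -, hZ⟩ := exists_subset_card_eq (s := (univ : Finset (Fin n))) (by simpa using hn)
  have hcover : ∀ a : Fin n → Bool, #{v | a v = true} = k →
      ∃ p ∈ patternScopes x Z, a ∘ p = x := fun a ha =>
    exists_mem_patternScopes_comp_eq (ha ▸ hk) (by simp [ha, hZ])
  refine ⟨(patternScopes x Z).map (Embedding.sigmaMk i), ?_, ?_, ?_, ?_⟩
  · simp only [mem_map, Embedding.sigmaMk_apply]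
    rintro _ ⟨p, hp, rfl⟩
    exact (mem_filter.1 hp).2
  · obtain ⟨S, -, hS⟩ := exists_subset_card_eq (s := (univ : Finset (Fin n))) (n := k)
      (by simp only [card_univ, Fintype.card_fin]; omega)
    obtain ⟨p, hp, -⟩ := hcover (· ∈ S) (by simpa using hS)
    exact ⟨_, mem_map_of_mem _ hp⟩
  · have hcard := card_patternScopes_le x Z
    rw [hZ, Fintype.card_fin, Fintype.card_fin] at hcard
    rw [card_map]
    exact_mod_cast hcard
  · rintro ⟨a, ha, hsat⟩
    obtain ⟨p, hp, hap⟩ := hcover a ha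
    have hviolated : fn i (a ∘ p) = true := hsat _ (mem_map_of_mem _ hp)
    rw [hap, hx] at hviolated
    exact Bool.false_ne_true hviolated

/-- **Non-triviality at the triviality cutoff.** Let `F` be a finite family of non-trivial
Boolean constraint functions (indexed by `ι`) and let `c = u_min(F)` (characterized by `hc_lb`
and `hc_ex`). Then for every `k ≥ c` there exist a constant `C > 0` and `n₀` such that for
every `n ≥ n₀` there is an instance over `F` on `n` variables, with at least one and at most
`C · n^c` constraints, admitting no satisfying assignment of weight exactly `k`. -/
theorem non_trivial_at_cutoff (ι : Type) [Fintype ι] [DecidableEq ι]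
    (arity : ι → ℕ) (fn : (i : ι) → (Fin (arity i) → Bool) → Bool)
    (hnontrivial : ∀ i : ι, ∃ x : Fin (arity i) → Bool, fn i x = false)
    (c : ℕ)
    (hc_lb : ∀ i : ι, ∀ x : Fin (arity i) → Bool, fn i x = false → c ≤ bweight x)
    (hc_ex : ∃ i : ι, ∃ x : Fin (arity i) → Bool, fn i x = false ∧ bweight x = c)
    (k : ℕ) (hk : c ≤ k) :
    ∃ C : ℝ, 0 < C ∧ ∃ n₀ : ℕ, ∀ n : ℕ, n₀ ≤ n →
      ∃ Φ : Finset ((i : ι) × (Fin (arity i) → Fin n)),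
        (∀ p ∈ Φ, Function.Injective p.2) ∧
        Φ.Nonempty ∧
        ((Φ.card : ℝ) ≤ C * (n : ℝ) ^ c) ∧
        ¬ ∃ a : Fin n → Bool,
            (Finset.univ.filter fun v => a v = true).card = k ∧
            ∀ p ∈ Φ, fn p.1 (fun j => a (p.2 j)) = true :=
  non_trivial_at_cutoff_general ι arity fn c hc_ex k hk
end

section
/- Let F be a finite family of non-trivial Boolean constraint functions, let k ∈ ℕ, and let C > 0 and ε > 0 be reals. Then there exists n₀ ∈ ℕ such that for all n ≥ n₀: every instance over F on n variables with at most C · n^{u_min(F) − ε} constraints in total admits a satisfying assignment of weight exactly k. -/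
/-!
Every violating assignment of a constraint has at least `c = u_min(F)` ones inside the scope,
so the indicator of a `k`-set `S` satisfies the instance as soon as `S` meets every scope in
fewer than `c` variables. A `k`-set failing this contains a `c`-subset of some scope; there are
at most `|Φ| · C(R, c)` such `c`-sets (`R` the maximal arity), each in `C(n - c, k - c)` of the
`k`-sets, and `C(n, k) C(k, c) = C(n, c) C(n - c, k - c)`. So a good `k`-set exists once
`|Φ| · C(R, c) · C(k, c) < C(n, c)`, which holds for large `n` because `C(n, c) = Θ(n^c)`
while `|Φ| = O(n^(c - ε))`.
-/

open Finset Filter Asymptotics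

section SetSystems

variable {α : Type*} [Fintype α] [DecidableEq α]

theorem card_filter_superset_powersetCard_le (F : Finset α) (k : ℕ) :
    #{S ∈ powersetCard k univ | F ⊆ S} ≤ (Fintype.card α - #F).choose (k - #F) := by
  calc #{S ∈ powersetCard k univ | F ⊆ S}
      ≤ #((powersetCard (k - #F) Fᶜ).image (· ∪ F)) := by
        refine card_le_card fun S hS => ?_
        obtain ⟨hSk, hFS⟩ := mem_filter.1 hS
        refine mem_image.2 ⟨S \ F, mem_powersetCard.2 ⟨?_, ?_⟩, sdiff_union_of_subset hFS⟩
        · exact fun x hx => mem_compl.2 (mem_sdiff.1 hx).2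
        · rw [card_sdiff_of_subset hFS, (mem_powersetCard.1 hSk).2]
    _ ≤ #(powersetCard (k - #F) Fᶜ) := card_image_le
    _ = (Fintype.card α - #F).choose (k - #F) := by rw [card_powersetCard, card_compl]

variable {β : Type*} (Φ : Finset β) (T : β → Finset α) {R c k : ℕ}

theorem choose_le_of_forall_exists_card_inter_ge (hT : ∀ p ∈ Φ, #(T p) ≤ R)
    (hcover : ∀ S ∈ powersetCard k (univ : Finset α), ∃ p ∈ Φ, c ≤ #(S ∩ T p)) :
    (Fintype.card α).choose k ≤ #Φ * R.choose c * (Fintype.card α - c).choose (k - c) := by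
  have hsub : powersetCard k (univ : Finset α) ⊆ Φ.biUnion fun p =>
      (powersetCard c (T p)).biUnion fun F => {S ∈ powersetCard k univ | F ⊆ S} := by
    intro S hS
    obtain ⟨p, hp, hcp⟩ := hcover S hS
    obtain ⟨F, hF, hFc⟩ := exists_subset_card_eq hcp
    refine mem_biUnion.2 ⟨p, hp, mem_biUnion.2 ⟨F, ?_, mem_filter.2 ⟨hS, ?_⟩⟩⟩
    · exact mem_powersetCard.2 ⟨hF.trans inter_subset_right, hFc⟩
    · exact hF.trans inter_subset_left
  have hscope : ∀ p ∈ Φ, #((powersetCard c (T p)).biUnion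
      fun F => {S ∈ powersetCard k univ | F ⊆ S}) ≤
        R.choose c * (Fintype.card α - c).choose (k - c) := by
    intro p hp
    calc _ ≤ ∑ F ∈ powersetCard c (T p), #{S ∈ powersetCard k univ | F ⊆ S} := card_biUnion_le
      _ ≤ ∑ _F ∈ powersetCard c (T p), (Fintype.card α - c).choose (k - c) := by
          refine sum_le_sum fun F hF => ?_
          simpa only [(mem_powersetCard.1 hF).2] using card_filter_superset_powersetCard_le F k
      _ ≤ R.choose c * (Fintype.card α - c).choose (k - c) := by
          rw [sum_const, card_powersetCard, smul_eq_mul]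
          exact Nat.mul_le_mul_right _ (Nat.choose_le_choose c (hT p hp))
  calc (Fintype.card α).choose k = #(powersetCard k (univ : Finset α)) := by
        rw [card_powersetCard, card_univ]
    _ ≤ _ := card_le_card hsub
    _ ≤ _ := card_biUnion_le
    _ ≤ ∑ _p ∈ Φ, R.choose c * (Fintype.card α - c).choose (k - c) := sum_le_sum hscope
    _ = _ := by rw [sum_const, smul_eq_mul, mul_assoc]

theorem exists_card_eq_forall_card_inter_lt (hT : ∀ p ∈ Φ, #(T p) ≤ R)
    (hk : k ≤ Fintype.card α)
    (hΦ : #Φ * R.choose c * k.choose c < (Fintype.card α).choose c) :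
    ∃ S : Finset α, #S = k ∧ ∀ p ∈ Φ, #(S ∩ T p) < c := by
  rcases lt_or_ge k c with hkc | hck
  · obtain ⟨S, -, hS⟩ := exists_subset_card_eq (s := (univ : Finset α)) (by simpa using hk)
    exact ⟨S, hS, fun p _ => (card_le_card inter_subset_left).trans_lt (hS ▸ hkc)⟩
  by_contra! hbad
  have hcover : ∀ S ∈ powersetCard k (univ : Finset α), ∃ p ∈ Φ, c ≤ #(S ∩ T p) :=
    fun S hS => hbad S (mem_powersetCard.1 hS).2
  set n := Fintype.card α
  have hcount := choose_le_of_forall_exists_card_inter_ge Φ T hT hcover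
  have hdouble : n.choose c * (n - c).choose (k - c) ≤
      #Φ * R.choose c * k.choose c * (n - c).choose (k - c) := calc
    n.choose c * (n - c).choose (k - c) = n.choose k * k.choose c := (Nat.choose_mul hck).symm
    _ ≤ #Φ * R.choose c * (n - c).choose (k - c) * k.choose c := Nat.mul_le_mul_right _ hcount
    _ = #Φ * R.choose c * k.choose c * (n - c).choose (k - c) := by ring
  exact hΦ.not_ge (Nat.le_of_mul_le_mul_right hdouble (Nat.choose_pos (by omega)))

end SetSystems

theorem bweight_decide_mem_comp_le {α : Type*} [DecidableEq α] {r : ℕ} {g : Fin r → α}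
    (hg : Function.Injective g) (S : Finset α) :
    bweight (fun j => decide (g j ∈ S)) ≤ #(S ∩ univ.image g) := by
  refine card_le_card_of_injOn g (fun j hj => ?_) hg.injOn
  simp only [coe_filter, mem_univ, true_and, decide_eq_true_eq, Set.mem_ofPred_eq] at hj
  exact mem_inter.2 ⟨hj, mem_image_of_mem g (mem_univ j)⟩

theorem eventually_mul_rpow_sub_lt_choose (A : ℝ) (c : ℕ) {ε : ℝ} (hε : 0 < ε) :
    ∀ᶠ n : ℕ in atTop, A * (n : ℝ) ^ ((c : ℝ) - ε) < n.choose c := by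
  have hratio : Tendsto (fun n : ℕ => A * (n : ℝ) ^ ((c : ℝ) - ε) / (n : ℝ) ^ c) atTop
      (nhds 0) := by
    have hlim : Tendsto (fun n : ℕ => A * (n : ℝ) ^ (-ε)) atTop (nhds (A * 0)) :=
      ((tendsto_rpow_neg_atTop hε).comp tendsto_natCast_atTop_atTop).const_mul A
    rw [mul_zero] at hlim
    refine hlim.congr' ((eventually_ge_atTop 1).mono fun n hn => ?_)
    have hn : (0 : ℝ) < n := by exact_mod_cast hn
    simp only [Real.rpow_sub hn, Real.rpow_natCast, Real.rpow_neg hn.le]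
    field_simp
  have hsmall : (fun n : ℕ => A * (n : ℝ) ^ ((c : ℝ) - ε)) =o[atTop] fun n => (n.choose c : ℝ) :=
    (isLittleO_of_tendsto' ((eventually_ge_atTop 1).mono fun n hn h =>
      absurd h (pow_ne_zero c (by exact_mod_cast (Nat.one_le_iff_ne_zero.1 hn))))
      hratio).trans_isBigO (isTheta_choose c).2
  filter_upwards [hsmall.def one_half_pos, eventually_ge_atTop c] with n hle hcn
  have hpos : (0 : ℝ) < n.choose c := by exact_mod_cast Nat.choose_pos hcn
  rw [Real.norm_of_nonneg hpos.le, Real.norm_eq_abs] at hle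
  linarith [le_abs_self (A * (n : ℝ) ^ ((c : ℝ) - ε))]

theorem trivial_below_cutoff_general (ι : Type) [Fintype ι]
    (arity : ι → ℕ) (fn : (i : ι) → (Fin (arity i) → Bool) → Bool)
    (c : ℕ)
    (hc_lb : ∀ i : ι, ∀ x : Fin (arity i) → Bool, fn i x = false → c ≤ bweight x)
    (k : ℕ) (C ε : ℝ) (hε : 0 < ε) :
    ∃ n₀ : ℕ, ∀ n : ℕ, n₀ ≤ n →
      ∀ Φ : Finset ((i : ι) × (Fin (arity i) → Fin n)),
        (∀ p ∈ Φ, Function.Injective p.2) →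
        ((Φ.card : ℝ) ≤ C * (n : ℝ) ^ ((c : ℝ) - ε)) →
        ∃ a : Fin n → Bool,
          (Finset.univ.filter fun v => a v = true).card = k ∧
          ∀ p ∈ Φ, fn p.1 (fun j => a (p.2 j)) = true := by
  classical
  set R := univ.sup arity
  set M : ℕ := R.choose c * k.choose c
  obtain ⟨n₀, hn₀⟩ := eventually_atTop.1
    ((eventually_mul_rpow_sub_lt_choose (C * M) c hε).and (eventually_ge_atTop k))
  refine ⟨n₀, fun n hn Φ hinj hcard => ?_⟩
  obtain ⟨hlt, hkn⟩ := hn₀ n hn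
  have hscope : ∀ p ∈ Φ, #(univ.image p.2) ≤ R := fun p _ =>
    card_image_le.trans ((card_fin _).trans_le (le_sup (mem_univ p.1)))
  have hΦ : #Φ * R.choose c * k.choose c < (Fintype.card (Fin n)).choose c := by
    rw [Fintype.card_fin, mul_assoc]
    have : (#Φ : ℝ) * M < n.choose c := calc
      (#Φ : ℝ) * M ≤ C * (n : ℝ) ^ ((c : ℝ) - ε) * M := by gcongr
      _ = C * M * (n : ℝ) ^ ((c : ℝ) - ε) := by ring
      _ < n.choose c := hlt
    exact_mod_cast this
  obtain ⟨S, hSk, hS⟩ := exists_card_eq_forall_card_inter_lt Φ (fun p => univ.image p.2) hscope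
    (by simpa using hkn) hΦ
  refine ⟨fun v => decide (v ∈ S), by simpa using hSk, fun p hp => ?_⟩
  by_contra hviol
  have hcS := hc_lb p.1 _ (by simpa using hviol)
  exact hcS.not_gt ((bweight_decide_mem_comp_le (hinj p hp) S).trans_lt (hS p hp))

/-- **Triviality below the cutoff.** Let `F` be a finite family of non-trivial Boolean
constraint functions (indexed by `ι`) with `u_min(F) = c` (characterized by `hc_lb` and
`hc_ex`), let `k ∈ ℕ` and `C, ε > 0` be reals. Then there exists `n₀` such that for all
`n ≥ n₀`, every instance over `F` on `n` variables with at most `C · n^(c - ε)` constraints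
in total admits a satisfying assignment of weight exactly `k`. -/
theorem trivial_below_cutoff (ι : Type) [Fintype ι] [DecidableEq ι]
    (arity : ι → ℕ) (fn : (i : ι) → (Fin (arity i) → Bool) → Bool)
    (hnontrivial : ∀ i : ι, ∃ x : Fin (arity i) → Bool, fn i x = false)
    (c : ℕ)
    (hc_lb : ∀ i : ι, ∀ x : Fin (arity i) → Bool, fn i x = false → c ≤ bweight x)
    (hc_ex : ∃ i : ι, ∃ x : Fin (arity i) → Bool, fn i x = false ∧ bweight x = c)
    (k : ℕ) (C ε : ℝ) (hC : 0 < C) (hε : 0 < ε) :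
    ∃ n₀ : ℕ, ∀ n : ℕ, n₀ ≤ n →
      ∀ Φ : Finset ((i : ι) × (Fin (arity i) → Fin n)),
        (∀ p ∈ Φ, Function.Injective p.2) →
        ((Φ.card : ℝ) ≤ C * (n : ℝ) ^ ((c : ℝ) - ε)) →
        ∃ a : Fin n → Bool,
          (Finset.univ.filter fun v => a v = true).card = k ∧
          ∀ p ∈ Φ, fn p.1 (fun j => a (p.2 j)) = true :=
  trivial_below_cutoff_general ι arity fn c hc_lb k C ε hε
end
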